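/- arXiv:1710.09562 — 2 statements merged into one kernel-verified Lean document; each statement's English description precedes it below -/
import Mathlib

section
/- Suppose the family of K-frames {φ_{ij}}_{j∈ℕ} (i = 1,…,m) for H is weakly K-woven. Then there exist a finite subset F ⊆ ℕ, a partition {τ_i}_{i=1}^m of F, and a constant A > 0 such that for every partition {σ_i}_{i=1}^m of ℕ ∖ F, the family ⋃_{i=1}^m {φ_{ij}}_{j∈σ_i∪τ_i} has lower K-frame bound A, i.e. ∑_{i=1}^m ∑_{j∈σ_i∪τ_i} |⟨f, φ_{ij}⟩|² ≥ A‖K* f‖² for all f ∈ H. -/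
/-! Argue by contradiction. If no finite partial partition admits a uniform lower bound, then
starting from the empty one we can extend it step by step: at stage `n` a counterexample `σ`, `f`
for the bound `1/(n+1)` exists, and since the coefficients of `f` have small tails, `σ` can be
cut off at a finite set `F' ∋ n`. The union of the resulting increasing chain of partial
partitions is a partition of `ℕ` agreeing with the `n`-th stage on `F_n`, so its weaving sum at
the `n`-th counterexample `f` is at most `2/(n+1) ‖K* f‖²`, contradicting weak wovenness. Only
nonnegativity and summability of the coefficients `‖⟪f, φ i j⟫‖²` enter, so the argument is run
for abstract weights `a x i j` and a lower-bound functional `c x`. -/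

local notation "⟪" x ", " y "⟫" => @inner ℂ _ _ x y

noncomputable section

variable {H : Type} [NormedAddCommGroup H] [InnerProductSpace ℂ H] [CompleteSpace H]

def IsKFrameWith (K : H →L[ℂ] H) (φ : ℕ → H) (A B : ℝ) : Prop :=
  0 < A ∧ 0 < B ∧ ∀ f : H,
    Summable (fun j : ℕ => ‖⟪f, φ j⟫‖ ^ 2) ∧
    A * ‖ContinuousLinearMap.adjoint K f‖ ^ 2 ≤ ∑' j : ℕ, ‖⟪f, φ j⟫‖ ^ 2 ∧
    ∑' j : ℕ, ‖⟪f, φ j⟫‖ ^ 2 ≤ B * ‖f‖ ^ 2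

section Partition

variable {α ι : Type*}

def IsPartitionOf (σ : ι → Set α) (S : Set α) : Prop :=
  Pairwise (Function.onFun Disjoint σ) ∧ ⋃ i, σ i = S

lemma isPartitionOf_ite_univ [DecidableEq ι] (i : ι) :
    IsPartitionOf (fun k => if k = i then (Set.univ : Set α) else ∅) Set.univ :=
  ⟨fun k l hkl => by simp only [Function.onFun]; split_ifs <;> simp_all,
    Set.eq_univ_of_univ_subset (Set.subset_iUnion_of_subset i (by simp))⟩

namespace IsPartitionOf

variable {σ τ : ι → Set α} {S T : Set α}

lemma subset (h : IsPartitionOf σ S) (i : ι) : σ i ⊆ S :=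
  h.2 ▸ Set.subset_iUnion σ i

lemma eq_of_mem_of_mem {x : α} {i j : ι} (h : IsPartitionOf σ S) (hi : x ∈ σ i) (hj : x ∈ σ j) :
    i = j := by
  by_contra hij
  exact Set.disjoint_left.1 (h.1 hij) hi hj

lemma union_inter (hτ : IsPartitionOf τ S) (hσ : IsPartitionOf σ Sᶜ) (hST : S ⊆ T) :
    IsPartitionOf (fun i => τ i ∪ σ i ∩ T) T := by
  refine ⟨fun i j hij => ?_, ?_⟩
  · refine Set.disjoint_left.2 fun x hxi hxj => ?_
    rcases hxi with hxi | ⟨hxi, -⟩ <;> rcases hxj with hxj | ⟨hxj, -⟩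
    · exact hij (hτ.eq_of_mem_of_mem hxi hxj)
    · exact hσ.subset j hxj (hτ.subset i hxi)
    · exact hσ.subset i hxi (hτ.subset j hxj)
    · exact hij (hσ.eq_of_mem_of_mem hxi hxj)
  · rw [Set.iUnion_union_distrib, hτ.2, ← Set.iUnion_inter, hσ.2, Set.inter_comm, ← Set.sdiff_eq,
      Set.union_sdiff_cancel hST]

lemma inter_subset_of_le {τ' : ι → Set α} (hτ : IsPartitionOf τ S) (hτ' : IsPartitionOf τ' T)
    (hle : τ ≤ τ') (i : ι) : τ' i ∩ S ⊆ τ i := by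
  rintro x ⟨hxi, hxS⟩
  rw [← hτ.2, Set.mem_iUnion] at hxS
  obtain ⟨j, hxj⟩ := hxS
  rwa [hτ'.eq_of_mem_of_mem hxi (hle j hxj)]

variable {τ : ℕ → ι → Set α} {S : ℕ → Set α}

lemma iUnion (h : ∀ n, IsPartitionOf (τ n) (S n)) (hmono : Monotone τ) :
    IsPartitionOf (fun i => ⋃ n, τ n i) (⋃ n, S n) := by
  refine ⟨fun i j hij => Set.disjoint_left.2 fun x hxi hxj => ?_, ?_⟩
  · obtain ⟨k, hk⟩ := Set.mem_iUnion.1 hxi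
    obtain ⟨l, hl⟩ := Set.mem_iUnion.1 hxj
    exact hij ((h (max k l)).eq_of_mem_of_mem (hmono (le_max_left k l) i hk)
      (hmono (le_max_right k l) j hl))
  · simp only [← (h _).2]
    exact Set.iUnion_comm _

lemma iUnion_subset_union_compl (h : ∀ n, IsPartitionOf (τ n) (S n)) (hmono : Monotone τ)
    (N : ℕ) (i : ι) : ⋃ n, τ n i ⊆ τ N i ∪ (S N)ᶜ := by
  intro x hx
  by_cases hxN : x ∈ S N
  · obtain ⟨k, hk⟩ := Set.mem_iUnion.1 hx
    exact Or.inl <| (h N).inter_subset_of_le (h (max k N)) (hmono (le_max_right k N)) i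
      ⟨hmono (le_max_left k N) i hk, hxN⟩
  · exact Or.inr hxN

end IsPartitionOf

end Partition

section WeavingSum

variable {α : Type*}

lemma tsum_subtype_le_add_of_subset_union {g : α → ℝ} (hg : 0 ≤ g) (hsum : Summable g)
    {s t u : Set α} (h : s ⊆ t ∪ u) : ∑' j : s, g j ≤ ∑' j : t, g j + ∑' j : u, g j := by
  rw [tsum_subtype, tsum_subtype, tsum_subtype,
    ← (hsum.indicator t).tsum_add (hsum.indicator u)]
  refine (hsum.indicator s).tsum_mono ((hsum.indicator t).add (hsum.indicator u)) fun j => ?_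
  have hnonneg (r : Set α) : 0 ≤ r.indicator g j := Set.indicator_nonneg (fun j _ => hg j) j
  by_cases hjs : j ∈ s
  · rw [Set.indicator_of_mem hjs]
    rcases h hjs with hj | hj
    · exact (Set.indicator_of_mem hj g).symm.le.trans (le_add_of_nonneg_right (hnonneg u))
    · exact (Set.indicator_of_mem hj g).symm.le.trans (le_add_of_nonneg_left (hnonneg t))
  · rw [Set.indicator_of_notMem hjs]
    exact add_nonneg (hnonneg t) (hnonneg u)

lemma tsum_subtype_mono {g : α → ℝ} (hg : 0 ≤ g) (hsum : Summable g) {s t : Set α}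
    (h : s ⊆ t) : ∑' j : s, g j ≤ ∑' j : t, g j := by
  rw [tsum_subtype, tsum_subtype]
  exact (hsum.indicator s).tsum_mono (hsum.indicator t) (Set.indicator_le_indicator_of_subset h hg)

variable {X ι : Type*} [Fintype ι]

def weavingSum (a : X → ι → α → ℝ) (σ : ι → Set α) (x : X) : ℝ :=
  ∑ i, ∑' j : σ i, a x i j

variable {a : X → ι → α → ℝ} (ha : ∀ x i j, 0 ≤ a x i j) (hsum : ∀ x i, Summable (a x i))
include ha

lemma weavingSum_nonneg (σ : ι → Set α) (x : X) : 0 ≤ weavingSum a σ x :=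
  Finset.sum_nonneg fun i _ => tsum_nonneg fun j => ha x i j

include hsum

lemma weavingSum_mono {σ τ : ι → Set α} (h : σ ≤ τ) (x : X) :
    weavingSum a σ x ≤ weavingSum a τ x :=
  Finset.sum_le_sum fun i _ => tsum_subtype_mono (ha x i) (hsum x i) (h i)

lemma weavingSum_le_add {σ τ ρ : ι → Set α} (h : ∀ i, σ i ⊆ τ i ∪ ρ i) (x : X) :
    weavingSum a σ x ≤ weavingSum a τ x + weavingSum a ρ x := by
  rw [weavingSum, weavingSum, weavingSum, ← Finset.sum_add_distrib]
  exact Finset.sum_le_sum fun i _ => tsum_subtype_le_add_of_subset_union (ha x i) (hsum x i) (h i)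

omit ha in
lemma exists_weavingSum_compl_lt (x : X) {ε : ℝ} (hε : 0 < ε) :
    ∃ t : Finset α, weavingSum a (fun _ => (↑t)ᶜ) x < ε := by
  obtain ⟨t, ht⟩ := ((tendsto_order.1
    (tendsto_tsum_compl_atTop_zero fun j => ∑ i, a x i j)).2 ε hε).exists
  refine ⟨t, lt_of_eq_of_lt ?_ ht⟩
  exact (Summable.tsum_finsetSum fun i _ => (hsum x i).subtype _).symm

end WeavingSum

section UniformLowerBound

variable {X ι : Type*} [Fintype ι] {a : X → ι → ℕ → ℝ} {c : X → ℝ}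
  (ha : ∀ x i j, 0 ≤ a x i j) (hsum : ∀ x i, Summable (a x i))
  (hcounter : ∀ (F : Finset ℕ) (τ : ι → Set ℕ), IsPartitionOf τ F → ∀ A, 0 < A →
    ∃ σ, IsPartitionOf σ (↑F)ᶜ ∧ ∃ x, weavingSum a (fun i => σ i ∪ τ i) x < A * c x)
include ha hsum hcounter

lemma exists_extension_with_small_weavingSum {F : Finset ℕ} {τ : ι → Set ℕ}
    (hτ : IsPartitionOf τ F) (n : ℕ) {ε : ℝ} (hε : 0 < ε) :
    ∃ (F' : Finset ℕ) (τ' : ι → Set ℕ) (x : X), IsPartitionOf τ' F' ∧ τ ≤ τ' ∧ n ∈ F' ∧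
      0 < c x ∧ weavingSum a τ' x ≤ ε * c x ∧ weavingSum a (fun _ => (↑F')ᶜ) x ≤ ε * c x := by
  obtain ⟨σ, hσ, x, hx⟩ := hcounter F τ hτ ε hε
  have hc : 0 < c x := pos_of_mul_pos_right ((weavingSum_nonneg ha _ x).trans_lt hx) hε.le
  obtain ⟨t, ht⟩ := exists_weavingSum_compl_lt hsum x (mul_pos hε hc)
  have hF : F ⊆ insert n (F ∪ t) := Finset.subset_union_left.trans (Finset.subset_insert _ _)
  have ht' : t ⊆ insert n (F ∪ t) := Finset.subset_union_right.trans (Finset.subset_insert _ _)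
  refine ⟨insert n (F ∪ t), fun i => τ i ∪ σ i ∩ ↑(insert n (F ∪ t)), x,
    hτ.union_inter hσ (Finset.coe_subset.2 hF), fun i => Set.subset_union_left, by simp, hc, ?_, ?_⟩
  · refine (weavingSum_mono ha hsum (fun i => ?_) x).trans hx.le
    exact Set.union_subset Set.subset_union_right
      (Set.inter_subset_left.trans Set.subset_union_left)
  · refine (weavingSum_mono ha hsum (fun _ => ?_) x).trans ht.le
    exact Set.compl_subset_compl.2 (Finset.coe_subset.2 ht')

lemma exists_seq_with_small_weavingSum :
    ∃ (F : ℕ → Finset ℕ) (τ : ℕ → ι → Set ℕ) (x : ℕ → X),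
      (∀ n, IsPartitionOf (τ n) (F n)) ∧ Monotone τ ∧ (∀ n, n ∈ F (n + 1)) ∧
      ∀ n, 0 < c (x n) ∧ weavingSum a (τ (n + 1)) (x n) ≤ (n + 1 : ℝ)⁻¹ * c (x n) ∧
        weavingSum a (fun _ => (↑(F (n + 1)))ᶜ) (x n) ≤ (n + 1 : ℝ)⁻¹ * c (x n) := by
  choose F' τ' x hτ' hle hn hx using
    fun (p : {p : Finset ℕ × (ι → Set ℕ) // IsPartitionOf p.2 p.1}) (n : ℕ) =>
      exists_extension_with_small_weavingSum ha hsum hcounter p.2 n (ε := (n + 1 : ℝ)⁻¹)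
        (by positivity)
  let P : ℕ → {p : Finset ℕ × (ι → Set ℕ) // IsPartitionOf p.2 p.1} := fun n =>
    Nat.rec ⟨(∅, fun _ => ∅), fun _ _ _ => disjoint_bot_left, by simp⟩
      (fun n p => ⟨(F' p n, τ' p n), hτ' p n⟩) n
  exact ⟨fun n => (P n).1.1, fun n => (P n).1.2, fun n => x (P n) n, fun n => (P n).2,
    monotone_nat_of_le_succ fun n => hle (P n) n, fun n => hn (P n) n, fun n => hx (P n) n⟩

end UniformLowerBound

theorem exists_finset_partition_uniform_lower_bound {X ι : Type*} [Fintype ι]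
    {a : X → ι → ℕ → ℝ} {c : X → ℝ} (ha : ∀ x i j, 0 ≤ a x i j)
    (hsum : ∀ x i, Summable (a x i))
    (hweave : ∀ σ : ι → Set ℕ, IsPartitionOf σ Set.univ →
      ∃ A, 0 < A ∧ ∀ x, A * c x ≤ weavingSum a σ x) :
    ∃ (F : Finset ℕ) (τ : ι → Set ℕ), IsPartitionOf τ F ∧ ∃ A, 0 < A ∧
      ∀ σ, IsPartitionOf σ (↑F)ᶜ → ∀ x, A * c x ≤ weavingSum a (fun i => σ i ∪ τ i) x := by
  by_contra! hcounter
  obtain ⟨F, τ, x, hτ, hmono, hcover, hx⟩ := exists_seq_with_small_weavingSum ha hsum hcounter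
  have hF : ⋃ n, (F n : Set ℕ) = Set.univ := Set.iUnion_eq_univ_iff.2 fun n => ⟨n + 1, hcover n⟩
  have hσ : IsPartitionOf (fun i => ⋃ n, τ n i) Set.univ := hF ▸ IsPartitionOf.iUnion hτ hmono
  obtain ⟨A, hA, hlower⟩ := hweave _ hσ
  obtain ⟨n, hn⟩ := exists_nat_one_div_lt (half_pos hA)
  obtain ⟨hc, hτx, htail⟩ := hx n
  have hA_le : A * c (x n) ≤ (2 * (n + 1 : ℝ)⁻¹) * c (x n) := calc
    A * c (x n) ≤ weavingSum a (fun i => ⋃ k, τ k i) (x n) := hlower _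
    _ ≤ weavingSum a (τ (n + 1)) (x n) + weavingSum a (fun _ => (↑(F (n + 1)))ᶜ) (x n) :=
      weavingSum_le_add ha hsum (IsPartitionOf.iUnion_subset_union_compl hτ hmono (n + 1)) _
    _ ≤ (2 * (n + 1 : ℝ)⁻¹) * c (x n) := by linarith
  rw [one_div] at hn
  linarith [le_of_mul_le_mul_right hA_le hc]

theorem stmt4_general
    (m : ℕ) (K : H →L[ℂ] H) (φ : Fin m → ℕ → H)
    -- the family is weakly K-woven
    (hweak : ∀ σ : Fin m → Set ℕ,
      Pairwise (Function.onFun Disjoint σ) → (⋃ i, σ i) = Set.univ →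
      ∃ A B : ℝ, 0 < A ∧ 0 < B ∧ ∀ f : H,
        (∀ i, Summable (fun j : σ i => ‖⟪f, φ i (j : ℕ)⟫‖ ^ 2)) ∧
        A * ‖ContinuousLinearMap.adjoint K f‖ ^ 2 ≤
          ∑ i : Fin m, ∑' j : σ i, ‖⟪f, φ i (j : ℕ)⟫‖ ^ 2 ∧
        ∑ i : Fin m, ∑' j : σ i, ‖⟪f, φ i (j : ℕ)⟫‖ ^ 2 ≤ B * ‖f‖ ^ 2) :
    ∃ F : Finset ℕ, ∃ τ : Fin m → Set ℕ,
      Pairwise (Function.onFun Disjoint τ) ∧ (⋃ i, τ i) = (F : Set ℕ) ∧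
      ∃ A : ℝ, 0 < A ∧
        ∀ σ : Fin m → Set ℕ,
          Pairwise (Function.onFun Disjoint σ) → (⋃ i, σ i) = ((F : Set ℕ))ᶜ →
          ∀ f : H,
            A * ‖ContinuousLinearMap.adjoint K f‖ ^ 2 ≤
              ∑ i : Fin m, ∑' j : (σ i ∪ τ i : Set ℕ), ‖⟪f, φ i (j : ℕ)⟫‖ ^ 2 := by
  -- assigning all of `ℕ` to `i` is a weaving, so each `φ i` is Bessel
  have hsum (f : H) (i : Fin m) : Summable fun j => ‖⟪f, φ i j⟫‖ ^ 2 := by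
    obtain ⟨_, _, -, -, hf⟩ := hweak _ (isPartitionOf_ite_univ i).1 (isPartitionOf_ite_univ i).2
    have hi := (hf f).1 i
    rw [if_pos rfl] at hi
    exact (Equiv.Set.univ ℕ).summable_iff.1 hi
  have hlower (σ : Fin m → Set ℕ) (hσ : IsPartitionOf σ Set.univ) : ∃ A, 0 < A ∧ ∀ f : H,
      A * ‖ContinuousLinearMap.adjoint K f‖ ^ 2 ≤
        weavingSum (fun f i j => ‖⟪f, φ i j⟫‖ ^ 2) σ f := by
    obtain ⟨A, _, hA, -, hf⟩ := hweak σ hσ.1 hσ.2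
    exact ⟨A, hA, fun f => (hf f).2.1⟩
  obtain ⟨F, τ, hτ, A, hA, hbound⟩ :=
    exists_finset_partition_uniform_lower_bound (fun _ _ _ => by positivity) hsum hlower
  exact ⟨F, τ, hτ.1, hτ.2, A, hA, fun σ hd hu => hbound σ ⟨hd, hu⟩⟩

theorem stmt4 [TopologicalSpace.SeparableSpace H]
    (m : ℕ) (K : H →L[ℂ] H) (φ : Fin m → ℕ → H)
    (hframe : ∀ i, ∃ A B : ℝ, IsKFrameWith K (φ i) A B)
    -- the family is weakly K-woven
    (hweak : ∀ σ : Fin m → Set ℕ,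
      Pairwise (Function.onFun Disjoint σ) → (⋃ i, σ i) = Set.univ →
      ∃ A B : ℝ, 0 < A ∧ 0 < B ∧ ∀ f : H,
        (∀ i, Summable (fun j : σ i => ‖⟪f, φ i (j : ℕ)⟫‖ ^ 2)) ∧
        A * ‖ContinuousLinearMap.adjoint K f‖ ^ 2 ≤
          ∑ i : Fin m, ∑' j : σ i, ‖⟪f, φ i (j : ℕ)⟫‖ ^ 2 ∧
        ∑ i : Fin m, ∑' j : σ i, ‖⟪f, φ i (j : ℕ)⟫‖ ^ 2 ≤ B * ‖f‖ ^ 2) :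
    ∃ F : Finset ℕ, ∃ τ : Fin m → Set ℕ,
      Pairwise (Function.onFun Disjoint τ) ∧ (⋃ i, τ i) = (F : Set ℕ) ∧
      ∃ A : ℝ, 0 < A ∧
        ∀ σ : Fin m → Set ℕ,
          Pairwise (Function.onFun Disjoint σ) → (⋃ i, σ i) = ((F : Set ℕ))ᶜ →
          ∀ f : H,
            A * ‖ContinuousLinearMap.adjoint K f‖ ^ 2 ≤
              ∑ i : Fin m, ∑' j : (σ i ∪ τ i : Set ℕ), ‖⟪f, φ i (j : ℕ)⟫‖ ^ 2 :=
  stmt4_general m K φ hweak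
end
end

section
/- Let H = ℓ²(ℕ) with canonical orthonormal basis {e_j}_{j∈ℕ}, let K be the orthogonal projection of H onto the closed span of {e_j : j ≥ 2}, and let U be the orthogonal projection of H onto the closed span of {e_j : j ≥ 3}. Define Φ = {φ_j}_{j∈ℕ} by φ_{2k−1} = e_k and φ_{2k} = 0 for all k ≥ 1, and Ψ = {ψ_j}_{j∈ℕ} by ψ₁ = 0, ψ₂ = e₁, ψ₃ = 0, ψ₄ = e₂, and ψ_{2k+1} = ψ_{2k+2} = e_{k+1} for all k ≥ 2. Then the images UΦ = {U(φ_j)}_{j∈ℕ} and UΨ = {U(ψ_j)}_{j∈ℕ} are UK-woven with universal bounds 1 and 2: for every subset σ ⊆ ℕ and every f ∈ H, ‖(UK)* f‖² ≤ ∑_{j∈σ} |⟨f, U(φ_j)⟩|² + ∑_{j∈σᶜ} |⟨f, U(ψ_j)⟩|² ≤ 2‖f‖². -/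
/- STATEMENT 15: in H = ℓ²(ℕ) (0-based canonical basis E 0, E 1, …; the paper's e_j is
E (j-1)), with K the orthogonal projection onto the closed span of {E k : k ≥ 1} and U the
orthogonal projection onto the closed span of {E k : k ≥ 2}, the images UΦ and UΨ of
Φ = {e₁, 0, e₂, 0, e₃, 0, …} and Ψ = {0, e₁, 0, e₂, e₃, e₃, e₄, e₄, …} are UK-woven with
universal bounds 1 and 2. -/

local notation "⟪" x ", " y "⟫" => @inner ℂ _ _ x y

noncomputable section

abbrev H2 : Type := lp (fun _ : ℕ => ℂ) 2

/-- The canonical orthonormal basis of ℓ²(ℕ) (0-based; the paper's `e_j` is `E (j-1)`). -/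
def E (n : ℕ) : H2 := lp.single 2 n 1

/-- The closed span of {E k : k ≥ 1}, i.e. of the paper's {e_j : j ≥ 2}. -/
def S : Submodule ℂ H2 :=
  (Submodule.span ℂ (Set.range fun k : ℕ => E (k + 1))).topologicalClosure

/-- The closed span of {E k : k ≥ 2}, i.e. of the paper's {e_j : j ≥ 3}. -/
def T : Submodule ℂ H2 :=
  (Submodule.span ℂ (Set.range fun k : ℕ => E (k + 2))).topologicalClosure

/-- Φ = {e₁, 0, e₂, 0, e₃, 0, …} (0-based indexing): φ_{2k−1} = e_k, φ_{2k} = 0. -/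
def Φ (n : ℕ) : H2 := if Even n then E (n / 2) else 0

/-- Ψ = {0, e₁, 0, e₂, e₃, e₃, e₄, e₄, …} (0-based indexing). -/
def Ψ (n : ℕ) : H2 := if n = 0 ∨ n = 2 then 0 else E (n / 2)

/- Since `T ≤ S`, the projections satisfy `U ∘ K = U`, so `(U K)* = U* = U` and
`‖(U K)* f‖² = ∑ₖ cₖ` with `cₖ = ‖⟪f, U (E k)⟫‖²` (Parseval for `U f`). As `U` kills `E 0` and
`E 1`, `U (Ψ j) = U (E (j / 2))` for every `j`: the `Ψ`-coefficients list each `cₖ` twice, while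
the `Φ`-coefficients list each `cₖ` once, interleaved with zeros. Termwise the `Φ`-coefficient is
at most the `Ψ`-coefficient, so every woven sum lies between `∑ₖ cₖ` and `2 ∑ₖ cₖ ≤ 2 ‖f‖²`. -/

lemma lp.hasSum_norm_sq {ι : Type*} {G : ι → Type*} [∀ i, NormedAddCommGroup (G i)]
    (g : lp G 2) : HasSum (fun i => ‖g i‖ ^ 2) (‖g‖ ^ 2) := by
  simpa using lp.hasSum_norm (p := 2) (by norm_num) g

lemma inner_E_left (n : ℕ) (g : H2) : ⟪E n, g⟫ = g n := by
  simp [E, lp.inner_single_left]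

lemma E_mem_orthogonal_T {n : ℕ} (hn : n < 2) : E n ∈ Tᗮ := by
  rw [T, Submodule.orthogonal_closure, ← Submodule.span_singleton_le_iff_mem,
    ← Submodule.isOrtho_iff_le, Submodule.isOrtho_span]
  rintro _ rfl _ ⟨k, rfl⟩
  simp only [E, lp.inner_single_left, lp.single_apply, Pi.single_apply, RCLike.inner_apply,
    map_one, mul_one, ite_eq_right_iff, one_ne_zero, imp_false]
  omega

lemma T_le_S : T ≤ S :=
  Submodule.topologicalClosure_mono <| Submodule.span_mono <| by
    rintro _ ⟨k, rfl⟩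
    exact ⟨k + 1, rfl⟩

instance : T.HasOrthogonalProjection := by unfold T; infer_instance

instance : S.HasOrthogonalProjection := by unfold S; infer_instance

lemma ContinuousLinearMap.eq_starProjection_of_forall {𝕜 F : Type*} [RCLike 𝕜]
    [NormedAddCommGroup F] [InnerProductSpace 𝕜 F] (P : F →L[𝕜] F) (V : Submodule 𝕜 F)
    [V.HasOrthogonalProjection]
    (h₁ : ∀ f, P f ∈ V) (h₂ : ∀ f, f - P f ∈ Vᗮ) : P = V.starProjection :=
  ContinuousLinearMap.ext fun f => (V.eq_starProjection_of_mem_orthogonal (h₁ f) (h₂ f)).symm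

lemma hasSum_norm_inner_starProjection_E (V : Submodule ℂ H2) [V.HasOrthogonalProjection]
    (f : H2) : HasSum (fun k => ‖⟪f, V.starProjection (E k)⟫‖ ^ 2) (‖V.starProjection f‖ ^ 2) := by
  convert lp.hasSum_norm_sq (V.starProjection f) using 2 with k
  rw [← inner_E_left, ← V.inner_starProjection_left_eq_right, norm_inner_symm]

lemma starProjection_T_Φ (j : ℕ) :
    T.starProjection (Φ j) = if Even j then T.starProjection (E (j / 2)) else 0 := by
  unfold Φ
  split_ifs <;> simp

lemma starProjection_T_Ψ (j : ℕ) : T.starProjection (Ψ j) = T.starProjection (E (j / 2)) := by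
  unfold Ψ
  split_ifs with h
  · rw [map_zero, eq_comm, Submodule.starProjection_apply_eq_zero_iff]
    exact E_mem_orthogonal_T (by omega)
  · rfl

lemma hasSum_ite_even_div_two {M : Type*} [AddCommMonoid M] [TopologicalSpace M] [ContinuousAdd M]
    {c : ℕ → M} {s : M} (h : HasSum c s) :
    HasSum (fun j => if Even j then c (j / 2) else 0) s := by
  simpa using HasSum.even_add_odd (f := fun j => if Even j then c (j / 2) else 0) (m' := 0)
    (by simpa using h) (by simp)

lemma hasSum_comp_div_two {M : Type*} [AddCommMonoid M] [TopologicalSpace M] [ContinuousAdd M]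
    {c : ℕ → M} {s : M} (h : HasSum c s) : HasSum (fun j => c (j / 2)) (s + s) :=
  HasSum.even_add_odd (by simpa using h) (by convert h using 3; omega)

section Weaving

variable {ι : Type*} {a b : ι → ℝ}

lemma tsum_le_tsum_subtype_add_tsum_compl (ha : 0 ≤ a) (hab : a ≤ b) (hb : Summable b)
    (σ : Set ι) : ∑' j, a j ≤ ∑' j : σ, a j + ∑' j : ↥σᶜ, b j := by
  have hs : Summable a := hb.of_nonneg_of_le ha hab
  rw [← Summable.tsum_add_tsum_compl (hs.subtype σ) (hs.subtype σᶜ)]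
  gcongr with j
  exacts [hs.subtype _, hb.subtype _, hab j]

lemma tsum_subtype_add_tsum_compl_le (ha : 0 ≤ a) (hab : a ≤ b) (hb : Summable b)
    (σ : Set ι) : ∑' j : σ, a j + ∑' j : ↥σᶜ, b j ≤ ∑' j, b j := by
  have hs : Summable a := hb.of_nonneg_of_le ha hab
  rw [← Summable.tsum_add_tsum_compl (hb.subtype σ) (hb.subtype σᶜ)]
  gcongr with j
  exacts [hs.subtype _, hb.subtype _, hab j]

end Weaving

theorem stmt15 (K U : H2 →L[ℂ] H2)
    -- K is the orthogonal projection of H2 onto S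
    (hK₁ : ∀ f : H2, K f ∈ S) (hK₂ : ∀ f : H2, f - K f ∈ Sᗮ)
    -- U is the orthogonal projection of H2 onto T
    (hU₁ : ∀ f : H2, U f ∈ T) (hU₂ : ∀ f : H2, f - U f ∈ Tᗮ) :
    ∀ σ : Set ℕ, ∀ f : H2,
      ‖ContinuousLinearMap.adjoint (U.comp K) f‖ ^ 2 ≤
        ∑' j : σ, ‖⟪f, U (Φ (j : ℕ))⟫‖ ^ 2 + ∑' j : ↥σᶜ, ‖⟪f, U (Ψ (j : ℕ))⟫‖ ^ 2 ∧
      ∑' j : σ, ‖⟪f, U (Φ (j : ℕ))⟫‖ ^ 2 + ∑' j : ↥σᶜ, ‖⟪f, U (Ψ (j : ℕ))⟫‖ ^ 2 ≤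
        2 * ‖f‖ ^ 2 := by
  intro σ f
  obtain rfl : U = T.starProjection := U.eq_starProjection_of_forall T hU₁ hU₂
  obtain rfl : K = S.starProjection := K.eq_starProjection_of_forall S hK₁ hK₂
  rw [Submodule.starProjection_comp_starProjection_of_le T_le_S,
    (isSelfAdjoint_starProjection T).adjoint_eq]
  have hc := hasSum_norm_inner_starProjection_E T f
  have hΦ : HasSum (fun j => ‖⟪f, T.starProjection (Φ j)⟫‖ ^ 2) (‖T.starProjection f‖ ^ 2) := by
    convert hasSum_ite_even_div_two hc using 2 with j
    rw [starProjection_T_Φ]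
    split_ifs <;> simp
  have hΨ : HasSum (fun j => ‖⟪f, T.starProjection (Ψ j)⟫‖ ^ 2)
      (‖T.starProjection f‖ ^ 2 + ‖T.starProjection f‖ ^ 2) := by
    simpa only [starProjection_T_Ψ] using hasSum_comp_div_two hc
  have hΦΨ : ∀ j, ‖⟪f, T.starProjection (Φ j)⟫‖ ^ 2 ≤ ‖⟪f, T.starProjection (Ψ j)⟫‖ ^ 2 := by
    intro j
    rw [starProjection_T_Φ, starProjection_T_Ψ]
    split_ifs <;> simp
  constructor
  · rw [← hΦ.tsum_eq]
    exact tsum_le_tsum_subtype_add_tsum_compl (fun _ => by positivity) hΦΨ hΨ.summable σ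
  · calc _ ≤ _ := tsum_subtype_add_tsum_compl_le (fun _ => by positivity) hΦΨ hΨ.summable σ
      _ = ‖T.starProjection f‖ ^ 2 + ‖T.starProjection f‖ ^ 2 := hΨ.tsum_eq
      _ ≤ ‖f‖ ^ 2 + ‖f‖ ^ 2 := by gcongr <;> exact T.norm_starProjection_apply_le f
      _ = 2 * ‖f‖ ^ 2 := (two_mul _).symm
end
end
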